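/- arXiv:1309.5236 — 2 statements merged into one kernel-verified Lean document; each statement's English description precedes it below -/
import Mathlib

section
/- Let G be a finite group of order m with identity e, let k ≥ 1, and let C be a subset of the right group G × R_k on which the first projection is injective (for each a ∈ G there is at most one j with (a,r_j) ∈ C). Then the number of edges E of the underlying graph of Cay(G×R_k, C) satisfies, as integers, 2·E ≥ m·( (2k−1)·|C| − c_e ). -/
/-!
Count the arcs `s → s * c` of the Cayley digraph (`s ∈ G × R_k`, `c ∈ C`): there are `m k |C|`,
of which `m c_e` are loops. Left multiplication is injective, so an arc is determined by its
endpoints and every edge of the underlying graph comes from one or two proper arcs; hence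
`2 E = 2 N - D`, where `N` counts proper arcs and `D` those whose reverse is an arc too.
The arc `s → s * c` can only be reversed by `(c.1⁻¹, s.2) ∈ C`, so by injectivity of the first
projection `s.2` is determined by `c`: at most `m |C|` arcs are reversible, and these include
the `m c_e` loops. Thus `D ≤ m (|C| - c_e)` and `2 E ≥ 2 m (k |C| - c_e) - m (|C| - c_e)`.
-/

/-- Multiplication of the right group `G × R_k`: `(g, r_i) * (h, r_j) = (g * h, r_j)`. -/
def rgMul {G : Type*} [Mul G] {k : ℕ} (s t : G × Fin k) : G × Fin k :=
  (s.1 * t.1, t.2)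

/-- The underlying simple graph of the Cayley digraph `Cay(S, C)`
(w.r.t. the multiplication `mul`). -/
def cayUGraph {S : Type*} (mul : S → S → S) (C : Set S) : SimpleGraph S where
  Adj s t := s ≠ t ∧ ∃ c ∈ C, mul s c = t ∨ mul t c = s
  symm := ⟨fun s t ⟨hne, c, hc, h⟩ => ⟨hne.symm, c, hc, h.symm⟩⟩
  loopless := ⟨fun s ⟨hne, _⟩ => hne rfl⟩

/-- `c_a`: the number of `j` with `(a, r_j) ∈ C`. -/
def cCount {G : Type*} [DecidableEq G] {k : ℕ} (C : Finset (G × Fin k)) (a : G) : ℕ :=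
  (C.filter (fun p => p.1 = a)).card

open Finset

namespace SimpleGraph

theorem two_mul_card_edgeFinset_eq_card_adj {V : Type*} [Fintype V] [DecidableEq V]
    (G : SimpleGraph V) [DecidableRel G.Adj] :
    2 * #G.edgeFinset = #{p : V × V | G.Adj p.1 p.2} := by
  rw [← sum_degrees_eq_twice_card_edges, card_filter, Fintype.sum_prod_type]
  refine sum_congr rfl fun v _ => ?_
  rw [← card_neighborFinset_eq_degree, neighborFinset_eq_filter, card_filter]

theorem two_mul_ncard_edgeSet_fromRel {V : Type*} [Fintype V] [DecidableEq V]
    (r : V → V → Prop) [DecidableRel r] :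
    2 * (fromRel r).edgeSet.ncard + #{p : V × V | p.1 ≠ p.2 ∧ r p.1 p.2 ∧ r p.2 p.1} =
      2 * #{p : V × V | p.1 ≠ p.2 ∧ r p.1 p.2} := by
  set A : Finset (V × V) := {p | p.1 ≠ p.2 ∧ r p.1 p.2}
  set B : Finset (V × V) := {p | p.1 ≠ p.2 ∧ r p.2 p.1}
  have hswap : #B = #A := card_equiv (Equiv.prodComm V V) (by simp [A, B, ne_comm])
  have hunion : ({p | (fromRel r).Adj p.1 p.2} : Finset (V × V)) = A ∪ B := by
    simp only [A, B, fromRel_adj, and_or_left, filter_or]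
  have hinter : ({p | p.1 ≠ p.2 ∧ r p.1 p.2 ∧ r p.2 p.1} : Finset (V × V)) = A ∩ B := by
    rw [← filter_and]
    exact filter_congr fun p _ => by tauto
  rw [← coe_edgeFinset, Set.ncard_coe_finset, two_mul_card_edgeFinset_eq_card_adj, hunion, hinter,
    card_union_add_card_inter, hswap, two_mul]

end SimpleGraph

open SimpleGraph

theorem cayUGraph_eq_fromRel {S : Type*} (mul : S → S → S) (C : Finset S) :
    cayUGraph mul C = fromRel fun s t => ∃ c ∈ C, mul s c = t := by
  ext s t
  simp only [cayUGraph, fromRel_adj, mem_coe, ← exists_or, and_or_left]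

section Cayley

variable {S : Type*} [Fintype S] [DecidableEq S] {mul : S → S → S} (C : Finset S)

theorem card_filter_arcs_eq_card_filter_pairs (hmul : ∀ s, Function.Injective (mul s)) (P : S × S → Prop)
    [DecidablePred P] :
    #{p ∈ univ ×ˢ C | P (p.1, mul p.1 p.2)} = #{q : S × S | P q ∧ ∃ c ∈ C, mul q.1 c = q.2} := by
  refine card_nbij (fun p => (p.1, mul p.1 p.2)) ?_ ?_ ?_
  · intro p hp
    simp only [coe_filter, mem_product, mem_univ, true_and, Set.mem_ofPred_eq] at hp ⊢
    exact ⟨hp.2, p.2, hp.1, rfl⟩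
  · rintro ⟨s, c⟩ - ⟨s', c'⟩ - h
    simp only [Prod.mk.injEq] at h
    obtain ⟨rfl, h⟩ := h
    rw [hmul s h]
  · rintro ⟨s, t⟩ hq
    simp only [coe_filter, mem_univ, true_and, Set.mem_ofPred_eq] at hq
    obtain ⟨hP, c, hc, rfl⟩ := hq
    exact ⟨(s, c), by simpa [hc] using hP, rfl⟩

theorem two_mul_ncard_edgeSet_cayUGraph (hmul : ∀ s, Function.Injective (mul s)) :
    2 * (cayUGraph mul C).edgeSet.ncard +
        #{p ∈ univ ×ˢ C | p.1 ≠ mul p.1 p.2 ∧ ∃ d ∈ C, mul (mul p.1 p.2) d = p.1} =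
      2 * #{p ∈ univ ×ˢ C | p.1 ≠ mul p.1 p.2} := by
  rw [cayUGraph_eq_fromRel, card_filter_arcs_eq_card_filter_pairs C hmul fun q => q.1 ≠ q.2,
    card_filter_arcs_eq_card_filter_pairs C hmul fun q => q.1 ≠ q.2 ∧ ∃ d ∈ C, mul q.2 d = q.1]
  convert two_mul_ncard_edgeSet_fromRel (fun s t => ∃ c ∈ C, mul s c = t) using 3
  exact filter_congr fun q _ => by tauto

theorem card_fixed_add_card_proper :
    #{p ∈ univ ×ˢ C | mul p.1 p.2 = p.1} + #{p ∈ univ ×ˢ C | p.1 ≠ mul p.1 p.2} =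
      Fintype.card S * #C := by
  rw [← card_univ, ← card_product, ← card_filter_add_card_filter_not (s := univ ×ˢ C)
    (fun p => mul p.1 p.2 = p.1)]
  simp only [ne_comm]

theorem card_fixed_add_card_reversible :
    #{p ∈ univ ×ˢ C | mul p.1 p.2 = p.1} +
        #{p ∈ univ ×ˢ C | p.1 ≠ mul p.1 p.2 ∧ ∃ d ∈ C, mul (mul p.1 p.2) d = p.1} =
      #{p ∈ univ ×ˢ C | ∃ d ∈ C, mul (mul p.1 p.2) d = p.1} := by
  rw [← card_filter_add_card_filter_not
    (s := {p ∈ univ ×ˢ C | ∃ d ∈ C, mul (mul p.1 p.2) d = p.1}) (fun p => mul p.1 p.2 = p.1),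
    filter_filter, filter_filter]
  congr 2
  · -- a loop `s → s * c` is reversed by `c` itself
    exact filter_congr fun p hp =>
      ⟨fun h => ⟨⟨p.2, (mem_product.1 hp).2, by rw [h, h]⟩, h⟩, And.right⟩
  · exact filter_congr fun p _ => by rw [ne_comm]; tauto

end Cayley

theorem rgMul_right_injective {G : Type*} [Mul G] [IsLeftCancelMul G] {k : ℕ} (s : G × Fin k) :
    Function.Injective (rgMul s) := by
  intro c d h
  simp only [rgMul, Prod.mk.injEq, mul_right_inj] at h
  exact Prod.ext h.1 h.2

theorem rgMul_eq_self_iff {G : Type*} [LeftCancelMonoid G] {k : ℕ} {s c : G × Fin k} :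
    rgMul s c = s ↔ c.1 = 1 ∧ c.2 = s.2 := by
  simp [rgMul, Prod.ext_iff]

section RightGroup

variable {G : Type*} [Group G] {k : ℕ}

theorem rgMul_rgMul_eq_self_iff {s c d : G × Fin k} :
    rgMul (rgMul s c) d = s ↔ d.1 = c.1⁻¹ ∧ d.2 = s.2 := by
  simp [rgMul, Prod.ext_iff, mul_assoc, mul_eq_one_iff_eq_inv']

variable [Fintype G] [DecidableEq G] (C : Finset (G × Fin k))

theorem card_rgMul_fixed :
    #{p ∈ univ ×ˢ C | rgMul p.1 p.2 = p.1} = Fintype.card G * cCount C 1 := by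
  rw [cCount, ← card_univ, ← card_product]
  refine card_bij' (fun p _ => (p.1.1, p.2)) (fun q _ => ((q.1, q.2.2), q.2)) ?_ ?_ ?_ ?_
  all_goals
    simp only [Prod.forall, mem_filter, mem_product, mem_univ, true_and, rgMul_eq_self_iff]
    aesop

theorem card_rgMul_reversible_le (hinj : Set.InjOn Prod.fst (C : Set (G × Fin k))) :
    #{p ∈ univ ×ˢ C | ∃ d ∈ C, rgMul (rgMul p.1 p.2) d = p.1} ≤ Fintype.card G * #C := by
  rw [← card_univ, ← card_product]
  refine card_le_card_of_injOn (fun p => (p.1.1, p.2)) ?_ ?_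
  · intro p hp
    simp only [coe_filter, mem_product, coe_product, Set.mem_prod] at hp ⊢
    exact ⟨mem_univ _, hp.1.2⟩
  · rintro ⟨⟨g, i⟩, c⟩ hp ⟨⟨g', i'⟩, c'⟩ hp' h
    simp only [coe_filter, mem_product, mem_univ, true_and, Set.mem_ofPred_eq,
      rgMul_rgMul_eq_self_iff, Prod.mk.injEq] at hp hp' h
    obtain ⟨rfl, rfl⟩ := h
    obtain ⟨-, d, hd, hd1, rfl⟩ := hp
    obtain ⟨-, d', hd', hd1', rfl⟩ := hp'
    rw [hinj hd hd' (hd1.trans hd1'.symm)]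

end RightGroup

theorem stmt5_general {G : Type*} [Group G] [Fintype G] [DecidableEq G] {k : ℕ}
    (C : Finset (G × Fin k))
    (hinj : Set.InjOn Prod.fst (C : Set (G × Fin k))) :
    2 * ((cayUGraph rgMul (C : Set (G × Fin k))).edgeSet.ncard : ℤ) ≥
      (Fintype.card G : ℤ) * ((2 * (k : ℤ) - 1) * C.card - cCount C 1) := by
  have hedges := two_mul_ncard_edgeSet_cayUGraph C rgMul_right_injective
  have harcs := card_fixed_add_card_proper (mul := rgMul) C
  have hrev := card_fixed_add_card_reversible (mul := rgMul) C
  have hle := card_rgMul_reversible_le C hinj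
  rw [card_rgMul_fixed] at harcs hrev
  rw [Fintype.card_prod, Fintype.card_fin] at harcs
  zify at hedges harcs hrev hle
  linarith

/-- Lower edge bound for `Cay(G × R_k, C)` when the first projection is injective on `C`:
`2·E ≥ m·((2k − 1)·|C| − c_e)`. -/
theorem stmt5 {G : Type*} [Group G] [Fintype G] [DecidableEq G] {k : ℕ} (hk : 1 ≤ k)
    (C : Finset (G × Fin k))
    (hinj : Set.InjOn Prod.fst (C : Set (G × Fin k))) :
    2 * ((cayUGraph rgMul (C : Set (G × Fin k))).edgeSet.ncard : ℤ) ≥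
      (Fintype.card G : ℤ) * ((2 * (k : ℤ) - 1) * C.card - cCount C 1) :=
  stmt5_general C hinj
end

section
/- Let G be a finite nontrivial group of order m, let k ≥ 4, and let C be a generating set of the right group G × R_k on which the first projection is injective (for each a ∈ G there is at most one j with (a,r_j) ∈ C). Then the underlying graph of Cay(G×R_k, C) has more than 3·k·m − 6 edges (so it violates the edge bound for planar graphs on k·m vertices given by Euler's formula). -/
/-- Membership in the subsemigroup generated by `C` (w.r.t. the multiplication `mul`). -/
inductive SgClosure {S : Type*} (mul : S → S → S) (C : Set S) : S → Prop
  | base {c : S} : c ∈ C → SgClosure mul C c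
  | mul {a b : S} : SgClosure mul C a → SgClosure mul C b → SgClosure mul C (mul a b)

open Finset

theorem Finset.card_le_two_mul_card_image_sym2Mk {α : Type*} [DecidableEq α]
    (A : Finset (α × α)) : #A ≤ 2 * #(A.image Sym2.mk.uncurry) :=
  card_le_mul_card_image _ 2 fun e he => by
    obtain ⟨p, -, rfl⟩ := mem_image.1 he
    calc #(A.filter (Sym2.mk.uncurry · = Sym2.mk.uncurry p)) ≤ #{p, p.swap} :=
          card_le_card fun q hq => by
            rcases Sym2.mk_eq_mk_iff.1 (mem_filter.1 hq).2 with rfl | rfl <;> simp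
      _ ≤ 2 := card_le_two

theorem Finset.two_mul_card_le_two_mul_card_image_sym2Mk_add {α : Type*} [DecidableEq α]
    (A : Finset (α × α)) :
    2 * #A ≤ 2 * #(A.image Sym2.mk.uncurry) + #(A.filter (·.swap ∈ A)) := by
  set A₁ := A.filter (·.swap ∈ A)
  set A₂ := A.filter (·.swap ∉ A)
  have hsplit : #A₁ + #A₂ = #A := card_filter_add_card_filter_not _
  have himage :
      A.image Sym2.mk.uncurry = A₁.image Sym2.mk.uncurry ∪ A₂.image Sym2.mk.uncurry := by
    rw [← image_union, filter_union_filter_not_eq]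
  have hdisj : Disjoint (A₁.image Sym2.mk.uncurry) (A₂.image Sym2.mk.uncurry) := by
    refine disjoint_left.2 fun e h₁ h₂ => ?_
    obtain ⟨p, hp, rfl⟩ := mem_image.1 h₁
    obtain ⟨q, hq, hqp⟩ := mem_image.1 h₂
    rw [mem_filter] at hp hq
    rcases Sym2.mk_eq_mk_iff.1 hqp with rfl | rfl
    · exact hq.2 hp.2
    · exact hq.2 (by simpa using hp.1)
  have hA₂ : #(A₂.image Sym2.mk.uncurry) = #A₂ := by
    refine card_image_of_injOn fun p hp q hq hpq => ?_
    rw [mem_coe, mem_filter] at hp hq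
    rcases Sym2.mk_eq_mk_iff.1 hpq with h | rfl
    · exact h
    · exact absurd (by simpa using hq.1) hp.2
  have hA₁ := A₁.card_le_two_mul_card_image_sym2Mk
  rw [himage, card_union_of_disjoint hdisj]
  omega

theorem SimpleGraph.two_mul_card_le_two_mul_ncard_edgeSet_add {V : Type*} [Finite V]
    [DecidableEq V] (Γ : SimpleGraph V) (A : Finset (V × V)) (hA : ∀ p ∈ A, Γ.Adj p.1 p.2) :
    2 * #A ≤ 2 * Γ.edgeSet.ncard + #(A.filter (·.swap ∈ A)) := by
  have hedges : #(A.image Sym2.mk.uncurry) ≤ Γ.edgeSet.ncard := by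
    rw [← Set.ncard_coe_finset]
    refine Set.ncard_le_ncard (fun e he => ?_) (Set.toFinite _)
    obtain ⟨p, hp, rfl⟩ := mem_image.1 he
    exact hA p hp
  have := A.two_mul_card_le_two_mul_card_image_sym2Mk_add
  omega

section RightGroup

variable {G : Type*} {k : ℕ}

theorem SgClosure.exists_snd_eq [Mul G] {C : Set (G × Fin k)} {s : G × Fin k}
    (h : SgClosure rgMul C s) : ∃ c ∈ C, c.2 = s.2 := by
  induction h with
  | base hc => exact ⟨_, hc, rfl⟩
  | mul _ _ _ ih => exact ih

theorem le_card_of_sgClosure_rgMul [Mul G] [Nonempty G] {C : Finset (G × Fin k)}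
    (hgen : ∀ s, SgClosure rgMul (C : Set (G × Fin k)) s) : k ≤ #C :=
  calc k = #(univ : Finset (Fin k)) := (card_fin k).symm
    _ ≤ #C := card_le_card_of_surjOn Prod.snd fun j _ =>
      (hgen (Classical.arbitrary G, j)).exists_snd_eq

variable [Group G]

theorem rgMul_eq_iff {s c t : G × Fin k} : rgMul s c = t ↔ c = (s.1⁻¹ * t.1, t.2) := by
  simp only [rgMul, Prod.ext_iff, eq_inv_mul_iff_mul_eq]

theorem rgMul_left_cancel {s c c' : G × Fin k} (h : rgMul s c = rgMul s c') : c = c' :=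
  (rgMul_eq_iff.1 h).trans (rgMul_eq_iff.1 rfl).symm

variable [Fintype G] [DecidableEq G]

def rgArcs (C : Finset (G × Fin k)) : Finset ((G × Fin k) × (G × Fin k)) :=
  (univ ×ˢ C).image fun p => (p.1, rgMul p.1 p.2)

variable {C : Finset (G × Fin k)}

theorem mem_rgArcs {s t : G × Fin k} : (s, t) ∈ rgArcs C ↔ (s.1⁻¹ * t.1, t.2) ∈ C := by
  simp [rgArcs, rgMul_eq_iff]

theorem card_rgArcs : #(rgArcs C) = Fintype.card G * k * #C := by
  rw [rgArcs, card_image_of_injective, card_product, card_univ, Fintype.card_prod,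
    Fintype.card_fin]
  rintro ⟨s, c⟩ ⟨s', c'⟩ h
  simp only [Prod.mk.injEq] at h
  obtain ⟨rfl, h⟩ := h
  rw [rgMul_left_cancel h]

theorem card_rgArcs_filter_eq_le (hinj : Set.InjOn Prod.fst (C : Set (G × Fin k))) :
    #((rgArcs C).filter fun p => p.1 = p.2) ≤ Fintype.card G := by
  rw [← card_univ]
  refine card_le_card_of_injOn (fun p => p.1.1) (fun _ _ => mem_univ _) ?_
  rintro ⟨s, t⟩ hp ⟨s', t'⟩ hp' (h : s.1 = s'.1)
  simp only [mem_coe, mem_filter] at hp hp'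
  obtain ⟨hs, rfl⟩ := hp
  obtain ⟨hs', rfl⟩ := hp'
  rw [mem_rgArcs, inv_mul_cancel] at hs hs'
  have h₂ : s.2 = s'.2 := (Prod.ext_iff.1 (hinj hs hs' rfl)).2
  simp [Prod.ext h h₂]

theorem card_filter_swap_mem_le_of_subset_rgArcs
    (hinj : Set.InjOn Prod.fst (C : Set (G × Fin k))) {A : Finset ((G × Fin k) × (G × Fin k))}
    (hA : A ⊆ rgArcs C) : #(A.filter (·.swap ∈ A)) ≤ Fintype.card G * #C := by
  calc #(A.filter (·.swap ∈ A)) ≤ #((univ : Finset G) ×ˢ C) := by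
        refine card_le_card_of_injOn (fun p => (p.1.1, (p.1.1⁻¹ * p.2.1, p.2.2)))
          (fun p hp => ?_) ?_
        · exact mem_product.2 ⟨mem_univ _, mem_rgArcs.1 (hA (mem_filter.1 hp).1)⟩
        rintro ⟨s, t⟩ hp ⟨s', t'⟩ hp' h
        simp only [Prod.mk.injEq] at h
        obtain ⟨h₁, ht₁, ht₂⟩ := h
        rw [h₁, mul_right_inj] at ht₁
        obtain rfl : t = t' := Prod.ext ht₁ ht₂
        simp only [mem_coe, mem_filter, Prod.swap_prod_mk] at hp hp'
        have hC := mem_rgArcs.1 (hA hp.2)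
        have hC' := mem_rgArcs.1 (hA hp'.2)
        have h₂ : s.2 = s'.2 := (Prod.ext_iff.1 (hinj hC hC' (by simp [h₁]))).2
        rw [Prod.ext h₁ h₂]
    _ = Fintype.card G * #C := by rw [card_product, card_univ]

end RightGroup

theorem stmt7_general {G : Type*} [Group G] [Fintype G] {k : ℕ} (hk : 4 ≤ k)
    (C : Finset (G × Fin k))
    (hgen : ∀ s : G × Fin k, SgClosure rgMul (C : Set (G × Fin k)) s)
    (hinj : Set.InjOn Prod.fst (C : Set (G × Fin k))) :
    ((cayUGraph rgMul (C : Set (G × Fin k))).edgeSet.ncard : ℤ) >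
      3 * (k : ℤ) * Fintype.card G - 6 := by
  classical
  set A := (rgArcs C).filter fun p => p.1 ≠ p.2
  have hadj : ∀ p ∈ A, (cayUGraph rgMul (C : Set (G × Fin k))).Adj p.1 p.2 := by
    rintro ⟨s, t⟩ hp
    obtain ⟨hst, hne⟩ := mem_filter.1 hp
    exact ⟨hne, _, mem_rgArcs.1 hst, Or.inl (rgMul_eq_iff.2 rfl)⟩
  have hsplit : #((rgArcs C).filter fun p => p.1 = p.2) + #A = Fintype.card G * k * #C := by
    rw [card_filter_add_card_filter_not, card_rgArcs]
  have hloops := card_rgArcs_filter_eq_le hinj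
  have hsym := card_filter_swap_mem_le_of_subset_rgArcs hinj (A := A) (filter_subset _ _)
  have hedges := (cayUGraph rgMul (C : Set (G × Fin k))).two_mul_card_le_two_mul_ncard_edgeSet_add
    A hadj
  have hkC := le_card_of_sgClosure_rgMul hgen
  have hm : 1 ≤ Fintype.card G := Fintype.card_pos
  zify at *
  have hfactor : (0 : ℤ) ≤ Fintype.card G * (2 * k - 1) := mul_nonneg (by positivity) (by linarith)
  nlinarith [mul_le_mul_of_nonneg_left hkC hfactor,
    mul_nonneg (sub_nonneg.2 hm) (mul_nonneg (by linarith : (0 : ℤ) ≤ 2 * k + 1) (sub_nonneg.2 hk))]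

/-- If `G` is a nontrivial finite group, `k ≥ 4` and `C` generates `G × R_k` with the
first projection injective on `C`, then the underlying graph of `Cay(G × R_k, C)` has
more than `3·k·m − 6` edges, violating Euler's planarity bound. -/
theorem stmt7 {G : Type*} [Group G] [Fintype G] [Nontrivial G] {k : ℕ} (hk : 4 ≤ k)
    (C : Finset (G × Fin k))
    (hgen : ∀ s : G × Fin k, SgClosure rgMul (C : Set (G × Fin k)) s)
    (hinj : Set.InjOn Prod.fst (C : Set (G × Fin k))) :
    ((cayUGraph rgMul (C : Set (G × Fin k))).edgeSet.ncard : ℤ) >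
      3 * (k : ℤ) * Fintype.card G - 6 :=
  stmt7_general hk C hgen hinj
end
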